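/- arXiv:2406.12857 — 6 statements merged into one kernel-verified Lean document; each statement's English description precedes it below -/
import Mathlib

section
/- Let n ≥ 1 and let K and K̃ be n×n matrices with nonnegative real entries. The following are equivalent: (i) R_e[K](η) = R_e[K̃](η) for all η ∈ ℝ₊ⁿ; (ii) R_e[K](η) = R_e[K̃](η) for all η ∈ {0,1}ⁿ; (iii) spec[K](η) = spec[K̃](η) for all η ∈ ℝ₊ⁿ; (iv) spec[K](η) = spec[K̃](η) for all η ∈ {0,1}ⁿ; (v) for every nonempty α ⊆ {1,…,n}, det K[α] = det K̃[α]. -/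
open Matrix

/-- Spectral radius of a real square matrix: the maximum of the moduli of its
complex eigenvalues. -/
noncomputable def specRad {ι : Type*} [Fintype ι] [DecidableEq ι]
    (M : Matrix ι ι ℝ) : ℝ :=
  sSup ((fun z : ℂ => ‖z‖) '' spectrum ℂ (M.map (Complex.ofReal : ℝ → ℂ)))

/-- Effective spectrum: spectrum of `K ⬝ Diag η` over `ℂ`. -/
noncomputable def espec {ι : Type*} [Fintype ι] [DecidableEq ι]
    (K : Matrix ι ι ℝ) (η : ι → ℝ) : Set ℂ :=
  spectrum ℂ ((K * Matrix.diagonal η).map (Complex.ofReal : ℝ → ℂ))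

/-- Effective spectral radius: spectral radius of `K ⬝ Diag η`. -/
noncomputable def eRad {ι : Type*} [Fintype ι] [DecidableEq ι]
    (K : Matrix ι ι ℝ) (η : ι → ℝ) : ℝ :=
  specRad (K * Matrix.diagonal η)

/-- Principal minor of `K` associated to the set of indices `α`. -/
def pminor {n : ℕ} (K : Matrix (Fin n) (Fin n) ℝ) (α : Finset (Fin n)) : ℝ :=
  (K.submatrix (fun i : α => (i : Fin n)) (fun j : α => (j : Fin n))).det

/-!
The characteristic polynomial of `K * diagonal η` has coefficients
`(-1) ^ k * ∑_{|s| = k} (∏ i ∈ s, η i) * det K[s]`, so equal principal minors give equal effective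
spectra. Conversely, for the indicator `η = 1_α` the nonzero effective spectrum is that of `K[α]`,
so equal effective spectral radii give `ρ(K[α]) = ρ(K̃[α])`. By the weak Perron–Frobenius theorem
this common radius is a root of the characteristic polynomials of both `K[α]` and `K̃[α]`; by
induction on `α` these polynomials differ only in their constant terms `±det`, which must then
agree.
-/

open Polynomial Filter Topology

namespace Matrix

abbrev principalSubmatrix {R ι : Type*} (M : Matrix ι ι R) (s : Finset ι) : Matrix s s R :=
  M.submatrix Subtype.val Subtype.val

theorem det_principalSubmatrix_principalSubmatrix {R ι : Type*} [CommRing R] [DecidableEq ι]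
    (M : Matrix ι ι R) (s : Finset ι) (t : Finset s) :
    ((M.principalSubmatrix s).principalSubmatrix t).det =
      (M.principalSubmatrix (t.map (Function.Embedding.subtype (· ∈ s)))).det := by
  rw [← det_submatrix_equiv_self (Finset.equivMap (Function.Embedding.subtype _) t)]
  rfl

section PrincipalMinors

variable {R ι : Type*} [CommRing R] [Fintype ι] [DecidableEq ι]

theorem charpoly_coeff_eq_of_det_principalSubmatrix_eq {M N : Matrix ι ι R} {m : ℕ}
    (h : ∀ s : Finset ι, s.card + m = Fintype.card ι →
      (M.principalSubmatrix s).det = (N.principalSubmatrix s).det) :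
    M.charpoly.coeff m = N.charpoly.coeff m := by
  nontriviality R
  rcases le_or_gt m (Fintype.card ι) with hm | hm
  · obtain ⟨k, hk, rfl⟩ : ∃ k ≤ Fintype.card ι, m = Fintype.card ι - k :=
      ⟨Fintype.card ι - m, Nat.sub_le _ _, (Nat.sub_sub_self hm).symm⟩
    rw [charpoly_coeff_eq_sum_minors M k hk, charpoly_coeff_eq_sum_minors N k hk]
    refine congrArg _ (Finset.sum_congr rfl fun s hs => h s ?_)
    rw [(Finset.mem_powersetCard.mp hs).2]
    omega
  · rw [coeff_eq_zero_of_natDegree_lt (by rwa [charpoly_natDegree_eq_dim]),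
      coeff_eq_zero_of_natDegree_lt (by rwa [charpoly_natDegree_eq_dim])]

theorem charpoly_eq_of_det_principalSubmatrix_eq {M N : Matrix ι ι R}
    (h : ∀ s : Finset ι, (M.principalSubmatrix s).det = (N.principalSubmatrix s).det) :
    M.charpoly = N.charpoly :=
  Polynomial.ext fun _ => charpoly_coeff_eq_of_det_principalSubmatrix_eq fun s _ => h s

/-- The two characteristic polynomials differ only in the constant term
`(-1) ^ card ι * (det M - det N)`, which a common root forces to vanish. -/
theorem det_eq_of_isRoot_charpoly [IsDomain R] {M N : Matrix ι ι R} {x : R}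
    (h : ∀ s : Finset ι, s ≠ Finset.univ →
      (M.principalSubmatrix s).det = (N.principalSubmatrix s).det)
    (hM : M.charpoly.IsRoot x) (hN : N.charpoly.IsRoot x) :
    M.det = N.det := by
  set p := M.charpoly - N.charpoly
  have hp : p = C (p.coeff 0) := by
    refine Polynomial.ext fun m => ?_
    rcases Nat.eq_zero_or_pos m with rfl | hm
    · simp
    rw [coeff_C, if_neg hm.ne', coeff_sub, sub_eq_zero]
    refine charpoly_coeff_eq_of_det_principalSubmatrix_eq fun s hs => h s fun hs' => ?_
    rw [hs', Finset.card_univ] at hs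
    omega
  have hp0 : p.coeff 0 = 0 := by
    have := congrArg (eval x) hp
    rwa [eval_C, eval_sub, hM.eq_zero, hN.eq_zero, sub_zero, eq_comm] at this
  rw [det_eq_sign_charpoly_coeff M, det_eq_sign_charpoly_coeff N, ← sub_eq_zero, ← mul_sub,
    ← coeff_sub, hp0, mul_zero]

theorem det_principalSubmatrix_mul_diagonal (M : Matrix ι ι R) (d : ι → R) (s : Finset ι) :
    ((M * diagonal d).principalSubmatrix s).det =
      (∏ i ∈ s, d i) * (M.principalSubmatrix s).det := by
  have : (M * diagonal d).principalSubmatrix s =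
      M.principalSubmatrix s * diagonal fun i : s => d i := by
    ext i j
    simp [mul_diagonal]
  rw [this, det_mul, det_diagonal, Finset.prod_coe_sort s d, mul_comm]

/-- Up to a block permutation, `M * diagonal 1_s` is `fromBlocks M[s] 0 M[sᶜ, s] 0`. -/
theorem charpoly_mul_diagonal_indicator (M : Matrix ι ι R) (s : Finset ι) :
    (M * diagonal fun i => if i ∈ s then 1 else 0).charpoly =
      X ^ (Fintype.card ι - s.card) * (M.principalSubmatrix s).charpoly := by
  let e : s ⊕ {i // i ∉ s} ≃ ι := Equiv.sumCompl (· ∈ s)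
  have hblocks : (M * diagonal fun i => if i ∈ s then 1 else 0).submatrix e e =
      fromBlocks (M.principalSubmatrix s) 0 (M.submatrix Subtype.val Subtype.val) 0 := by
    ext (i | i) (j | j) <;> simp [e, mul_diagonal, j.2]
  rw [← charpoly_reindex e.symm, reindex_apply, Equiv.symm_symm, hblocks,
    charpoly_fromBlocks_zero₁₂, charpoly_zero, mul_comm, Fintype.card_subtype_compl,
    Fintype.card_coe]

end PrincipalMinors

section ComplexSpectrum

variable {ι : Type*} [Fintype ι] [DecidableEq ι]

theorem mem_spectrum_map_ofReal_iff {A : Matrix ι ι ℝ} {z : ℂ} :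
    z ∈ spectrum ℂ (A.map Complex.ofReal) ↔ aeval z A.charpoly = 0 := by
  change z ∈ spectrum ℂ (A.map Complex.ofRealHom) ↔ _
  rw [mem_spectrum_iff_isRoot_charpoly, charpoly_map, IsRoot.def, eval_map, aeval_def]
  rfl

theorem ofReal_mem_spectrum_map_ofReal_iff {A : Matrix ι ι ℝ} {t : ℝ} :
    (t : ℂ) ∈ spectrum ℂ (A.map Complex.ofReal) ↔ t ∈ spectrum ℝ A := by
  rw [mem_spectrum_map_ofReal_iff, mem_spectrum_iff_isRoot_charpoly, IsRoot.def,
    ← Complex.coe_algebraMap, aeval_algebraMap_apply_eq_algebraMap_eval,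
    FaithfulSMul.algebraMap_eq_zero_iff]

theorem spectrum_map_ofReal_nonempty [Nonempty ι] (A : Matrix ι ι ℝ) :
    (spectrum ℂ (A.map Complex.ofReal)).Nonempty := by
  obtain ⟨z, hz⟩ := IsAlgClosed.exists_root (A.map Complex.ofReal).charpoly
    (by rw [charpoly_degree_eq_dim]; exact_mod_cast Fintype.card_ne_zero)
  exact ⟨z, mem_spectrum_iff_isRoot_charpoly.mpr hz⟩

end ComplexSpectrum

end Matrix

section SpectralRadius

variable {ι κ : Type*} [Fintype ι] [DecidableEq ι] [Fintype κ] [DecidableEq κ]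

theorem norm_le_specRad {A : Matrix ι ι ℝ} {z : ℂ}
    (hz : z ∈ spectrum ℂ (A.map Complex.ofReal)) : ‖z‖ ≤ specRad A :=
  le_csSup ((finite_spectrum _).image _).bddAbove ⟨z, hz, rfl⟩

theorem exists_norm_eq_specRad [Nonempty ι] (A : Matrix ι ι ℝ) :
    ∃ z ∈ spectrum ℂ (A.map Complex.ofReal), ‖z‖ = specRad A :=
  ((spectrum_map_ofReal_nonempty A).image _).csSup_mem ((finite_spectrum _).image _)

theorem specRad_nonneg [Nonempty ι] (A : Matrix ι ι ℝ) : 0 ≤ specRad A := by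
  obtain ⟨z, -, hz⟩ := exists_norm_eq_specRad A
  exact hz ▸ norm_nonneg z

theorem specRad_eq_of_charpoly_eq_X_pow_mul [Nonempty κ] {A : Matrix ι ι ℝ}
    {B : Matrix κ κ ℝ} {k : ℕ} (h : A.charpoly = X ^ k * B.charpoly) :
    specRad A = specRad B := by
  have hmem : ∀ z, z ∈ spectrum ℂ (A.map Complex.ofReal) ↔
      z ^ k = 0 ∨ z ∈ spectrum ℂ (B.map Complex.ofReal) := by
    intro z
    simp only [mem_spectrum_map_ofReal_iff, h, map_mul, map_pow, aeval_X, mul_eq_zero]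
  obtain ⟨z, hzB, hz⟩ := exists_norm_eq_specRad B
  have hzA := (hmem z).2 (Or.inr hzB)
  refine le_antisymm (csSup_le ⟨_, z, hzA, rfl⟩ ?_) (hz ▸ norm_le_specRad hzA)
  rintro _ ⟨w, hw, rfl⟩
  show ‖w‖ ≤ specRad B
  rcases (hmem w).1 hw with hw0 | hwB
  · rw [(pow_eq_zero_iff'.mp hw0).1, norm_zero]
    exact specRad_nonneg B
  · exact norm_le_specRad hwB

theorem eRad_indicator (K : Matrix ι ι ℝ) {s : Finset ι} (hs : s.Nonempty) :
    eRad K (fun i => if i ∈ s then 1 else 0) = specRad (K.principalSubmatrix s) :=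
  have := hs.coe_sort
  specRad_eq_of_charpoly_eq_X_pow_mul (charpoly_mul_diagonal_indicator K s)

theorem espec_eq_of_det_principalSubmatrix_eq {K K' : Matrix ι ι ℝ}
    (h : ∀ s : Finset ι, (K.principalSubmatrix s).det = (K'.principalSubmatrix s).det)
    (η : ι → ℝ) : espec K η = espec K' η := by
  have hchar : (K * diagonal η).charpoly = (K' * diagonal η).charpoly :=
    charpoly_eq_of_det_principalSubmatrix_eq fun s => by
      rw [det_principalSubmatrix_mul_diagonal, det_principalSubmatrix_mul_diagonal, h]
  ext z
  rw [espec, espec, mem_spectrum_map_ofReal_iff, mem_spectrum_map_ofReal_iff, hchar]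

theorem eRad_eq_of_espec_eq {K K' : Matrix ι ι ℝ} {η : ι → ℝ} (h : espec K η = espec K' η) :
    eRad K η = eRad K' η :=
  congrArg (fun S => sSup ((fun z : ℂ => ‖z‖) '' S)) h

end SpectralRadius

section Neumann

theorem tendsto_inv_smul_pow_of_spectralRadius_lt {A : Type*} [NormedRing A]
    [NormedAlgebra ℂ A] [CompleteSpace A] {a : A} {t : ℂ} (h : spectralRadius ℂ a < ‖t‖₊) :
    Tendsto (fun N : ℕ => (t⁻¹ • a) ^ N) atTop (𝓝 0) := by
  obtain ⟨s, has, hst⟩ := ENNReal.lt_iff_exists_nnreal_btwn.mp h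
  have hst' : (s : ℝ) < ‖t‖ := by exact_mod_cast hst
  have ht : 0 < ‖t‖ := s.coe_nonneg.trans_lt hst'
  have hbound : ∀ᶠ N : ℕ in atTop, ‖(t⁻¹ • a) ^ N‖ ≤ (s / ‖t‖) ^ N := by
    filter_upwards [(spectrum.pow_nnnorm_pow_one_div_tendsto_nhds_spectralRadius a
      ).eventually_lt_const has, eventually_ne_atTop 0] with N hN hN0
    rw [one_div, ENNReal.rpow_inv_lt_iff (Nat.cast_pos.mpr (Nat.pos_of_ne_zero hN0)), ENNReal.rpow_natCast,
      ← ENNReal.coe_pow, ENNReal.coe_lt_coe, ← NNReal.coe_lt_coe, coe_nnnorm,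
      NNReal.coe_pow] at hN
    rw [_root_.smul_pow, norm_smul, norm_pow, norm_inv, div_pow, inv_pow, inv_mul_eq_div]
    gcongr
  exact squeeze_zero_norm' hbound
    (tendsto_pow_atTop_nhds_zero_of_lt_one (by positivity) ((div_lt_one ht).mpr hst'))

theorem tendsto_inv_smul_geom_sum_resolvent {𝕜 A : Type*} [Field 𝕜] [Ring A] [Algebra 𝕜 A]
    [TopologicalSpace A] [IsTopologicalRing A] {a : A} {t : 𝕜} (ht0 : t ≠ 0)
    (ht : t ∈ resolventSet 𝕜 a) (h : Tendsto (fun N : ℕ => (t⁻¹ • a) ^ N) atTop (𝓝 0)) :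
    Tendsto (fun N => t⁻¹ • ∑ k ∈ Finset.range N, (t⁻¹ • a) ^ k) atTop
      (𝓝 (resolvent a t)) := by
  have hfac : algebraMap 𝕜 A t - a = t • (1 - t⁻¹ • a) := by
    rw [smul_sub, smul_smul, mul_inv_cancel₀ ht0, one_smul, Algebra.algebraMap_eq_smul_one]
  have hsum : ∀ N, t⁻¹ • ∑ k ∈ Finset.range N, (t⁻¹ • a) ^ k =
      resolvent a t * (1 - (t⁻¹ • a) ^ N) := by
    intro N
    rw [resolvent, ← mul_neg_geom_sum, ← Ring.inverse_mul_cancel_left _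
      (t⁻¹ • ∑ k ∈ Finset.range N, (t⁻¹ • a) ^ k) (spectrum.mem_resolventSet_iff.mp ht), hfac,
      smul_mul_smul_comm, mul_inv_cancel₀ ht0, one_smul]
  have := (tendsto_const_nhds (x := (1 : A)).sub h).const_mul (resolvent a t)
  rw [sub_zero, mul_one] at this
  exact this.congr fun N => (hsum N).symm

end Neumann

section PerronFrobenius

attribute [local instance] Matrix.linftyOpNormedRing Matrix.linftyOpNormedAlgebra

variable {ι : Type*} [Fintype ι] [DecidableEq ι] [Nonempty ι]

theorem tendsto_inv_smul_pow_of_specRad_lt {A : Matrix ι ι ℝ} {t : ℝ} (ht : specRad A < t) :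
    Tendsto (fun N : ℕ => (t⁻¹ • A) ^ N) atTop (𝓝 0) := by
  have hρ : spectralRadius ℂ (A.map Complex.ofReal) < ‖(t : ℂ)‖₊ :=
    spectrum.spectralRadius_lt_of_forall_lt _ fun z hz => by
      rw [← NNReal.coe_lt_coe, coe_nnnorm, coe_nnnorm, Complex.norm_real, Real.norm_eq_abs]
      exact (norm_le_specRad hz).trans_lt (ht.trans_le (le_abs_self t))
  have hmap : ∀ N : ℕ, (t⁻¹ • A) ^ N =
      (((t : ℂ)⁻¹ • A.map Complex.ofReal) ^ N).map Complex.re := by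
    intro N
    have : (t : ℂ)⁻¹ • A.map Complex.ofReal = (t⁻¹ • A).map Complex.ofRealHom := by
      ext i j
      simp
    rw [this, ← RingHom.mapMatrix_apply, ← map_pow, RingHom.mapMatrix_apply, Matrix.map_map]
    ext i j
    simp
  have := ((continuous_id.matrix_map Complex.continuous_re).tendsto 0).comp
    (tendsto_inv_smul_pow_of_spectralRadius_lt hρ)
  rw [id, Matrix.map_zero _ Complex.zero_re] at this
  exact this.congr fun N => (hmap N).symm

theorem exists_nonneg_specRad_mul_le_mulVec {A : Matrix ι ι ℝ} (hA : ∀ i j, 0 ≤ A i j) :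
    ∃ x : ι → ℝ, (∀ i, 0 ≤ x i) ∧ x ≠ 0 ∧ ∀ i, specRad A * x i ≤ (A *ᵥ x) i := by
  obtain ⟨z, hz, hnorm⟩ := exists_norm_eq_specRad A
  obtain ⟨v, hv0, hv⟩ : ∃ v, v ≠ 0 ∧ (scalar ι z - A.map Complex.ofReal) *ᵥ v = 0 :=
    exists_mulVec_eq_zero_iff.mpr (by
      rw [← eval_charpoly]
      exact mem_spectrum_iff_isRoot_charpoly.mp hz)
  have hev : ∀ i, z * v i = ∑ j, (A i j : ℂ) * v j := by
    intro i
    have := congrFun hv i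
    rwa [sub_mulVec, Pi.sub_apply, Pi.zero_apply, sub_eq_zero, scalar_apply,
      mulVec_diagonal] at this
  refine ⟨fun i => ‖v i‖, fun i => norm_nonneg _,
    fun h => hv0 (funext fun i => norm_eq_zero.mp (congrFun h i)), fun i => ?_⟩
  calc specRad A * ‖v i‖ = ‖∑ j, (A i j : ℂ) * v j‖ := by rw [← hev, norm_mul, hnorm]
    _ ≤ ∑ j, ‖(A i j : ℂ) * v j‖ := norm_sum_le _ _
    _ = (A *ᵥ fun i => ‖v i‖) i := by
      simp [mulVec, dotProduct, abs_of_nonneg (hA _ _)]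

theorem resolvent_apply_nonneg_of_specRad_lt {A : Matrix ι ι ℝ} (hA : ∀ i j, 0 ≤ A i j)
    {t : ℝ} (ht : specRad A < t) (i j : ι) : 0 ≤ resolvent A t i j := by
  have ht0 : 0 < t := (specRad_nonneg A).trans_lt ht
  have hres : t ∈ resolventSet ℝ A := spectrum.notMem_iff.mp fun hmem => ht.not_ge <| by
    have := norm_le_specRad (ofReal_mem_spectrum_map_ofReal_iff.mpr hmem)
    rwa [Complex.norm_real, Real.norm_of_nonneg ht0.le] at this
  have hlim := tendsto_inv_smul_geom_sum_resolvent ht0.ne' hres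
    (tendsto_inv_smul_pow_of_specRad_lt ht)
  refine ge_of_tendsto ((hlim.apply_nhds i).apply_nhds j) (Eventually.of_forall fun N => ?_)
  simp only [Matrix.smul_apply, Matrix.sum_apply, smul_eq_mul]
  exact mul_nonneg (inv_nonneg.mpr ht0.le) (Finset.sum_nonneg fun k _ =>
    pow_apply_nonneg (fun i j => mul_nonneg (inv_nonneg.mpr ht0.le) (hA i j)) k i j)

/-- Weak Perron–Frobenius. If `r := specRad A` were not an eigenvalue, the resolvent would be
continuous at `r`, hence entrywise nonnegative there as a limit of Neumann series; applied to
the vector `x ≥ 0` with `A x ≥ r x`, it would give `x ≤ 0`. -/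
theorem specRad_mem_spectrum {A : Matrix ι ι ℝ} (hA : ∀ i j, 0 ≤ A i j) :
    specRad A ∈ spectrum ℝ A := by
  set r := specRad A
  by_contra hr
  replace hr : r ∈ resolventSet ℝ A := spectrum.notMem_iff.mp hr
  obtain ⟨x, hx0, hxne, hx⟩ := exists_nonneg_specRad_mul_le_mulVec hA
  have hcont := (spectrum.hasDerivAt_resolvent_const_left hr).continuousAt.tendsto.mono_left
    (nhdsWithin_le_nhds (s := Set.Ioi r))
  have hR : ∀ i j, 0 ≤ resolvent A r i j := fun i j =>
    ge_of_tendsto ((hcont.apply_nhds i).apply_nhds j) (eventually_nhdsWithin_of_forall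
      fun t (ht : r < t) => resolvent_apply_nonneg_of_specRad_lt hA ht i j)
  have hxeq : x = resolvent A r *ᵥ ((algebraMap ℝ _ r - A) *ᵥ x) := by
    rw [mulVec_mulVec, resolvent, Ring.inverse_mul_cancel _
      (spectrum.mem_resolventSet_iff.mp hr), one_mulVec]
  refine hxne (funext fun i => le_antisymm ?_ (hx0 i))
  rw [hxeq]
  refine Finset.sum_nonpos fun j _ => mul_nonpos_of_nonneg_of_nonpos (hR i j) ?_
  simpa [sub_mulVec, algebraMap_eq_diagonal, mulVec_diagonal] using hx j

end PerronFrobenius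

theorem det_principalSubmatrix_eq_of_specRad_eq {ι : Type*} [Fintype ι] [DecidableEq ι]
    {M N : Matrix ι ι ℝ} (hM : ∀ i j, 0 ≤ M i j) (hN : ∀ i j, 0 ≤ N i j)
    (h : ∀ s : Finset ι, s.Nonempty →
      specRad (M.principalSubmatrix s) = specRad (N.principalSubmatrix s))
    (s : Finset ι) : (M.principalSubmatrix s).det = (N.principalSubmatrix s).det := by
  induction s using Finset.strongInduction with
  | _ s ih =>
  rcases s.eq_empty_or_nonempty with rfl | hs
  · simp
  have := hs.coe_sort
  refine det_eq_of_isRoot_charpoly (fun t ht => ?_)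
    (mem_spectrum_iff_isRoot_charpoly.mp (specRad_mem_spectrum fun i j => hM _ _))
    (h s hs ▸ mem_spectrum_iff_isRoot_charpoly.mp (specRad_mem_spectrum fun i j => hN _ _))
  rw [det_principalSubmatrix_principalSubmatrix, det_principalSubmatrix_principalSubmatrix]
  refine ih _ ?_
  have := (Finset.map_ssubset_map (f := Function.Embedding.subtype (· ∈ s))).mpr
    (Finset.ssubset_univ_iff.mpr ht)
  rwa [Finset.univ_eq_attach, Finset.attach_map_val] at this

theorem effective_spectrum_principal_minors_tfae_general
    {n : ℕ} (K Kt : Matrix (Fin n) (Fin n) ℝ)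
    (hK : ∀ i j, 0 ≤ K i j) (hKt : ∀ i j, 0 ≤ Kt i j) :
    List.TFAE [
      ∀ η : Fin n → ℝ, (∀ i, 0 ≤ η i) → eRad K η = eRad Kt η,
      ∀ η : Fin n → ℝ, (∀ i, η i = 0 ∨ η i = 1) → eRad K η = eRad Kt η,
      ∀ η : Fin n → ℝ, (∀ i, 0 ≤ η i) → espec K η = espec Kt η,
      ∀ η : Fin n → ℝ, (∀ i, η i = 0 ∨ η i = 1) → espec K η = espec Kt η,
      ∀ α : Finset (Fin n), α.Nonempty → pminor K α = pminor Kt α] := by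
  have nonneg_of_binary (η : Fin n → ℝ) (hη : ∀ i, η i = 0 ∨ η i = 1) (i : Fin n) : 0 ≤ η i := by
    rcases hη i with h | h <;> simp [h]
  tfae_have 1 → 2 := fun h η hη => h η (nonneg_of_binary η hη)
  tfae_have 3 → 4 := fun h η hη => h η (nonneg_of_binary η hη)
  tfae_have 3 → 1 := fun h η hη => eRad_eq_of_espec_eq (h η hη)
  tfae_have 4 → 2 := fun h η hη => eRad_eq_of_espec_eq (h η hη)
  tfae_have 2 → 5 := by
    refine fun h α _ => det_principalSubmatrix_eq_of_specRad_eq hK hKt (fun s hs => ?_) α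
    rw [← eRad_indicator K hs, ← eRad_indicator Kt hs]
    exact h _ fun i => by by_cases hi : i ∈ s <;> simp [hi]
  tfae_have 5 → 3 := by
    refine fun h η _ => espec_eq_of_det_principalSubmatrix_eq (fun s => ?_) η
    rcases s.eq_empty_or_nonempty with rfl | hs
    · simp
    · exact h s hs
  tfae_finish

theorem effective_spectrum_principal_minors_tfae
    {n : ℕ} (hn : 1 ≤ n) (K Kt : Matrix (Fin n) (Fin n) ℝ)
    (hK : ∀ i j, 0 ≤ K i j) (hKt : ∀ i j, 0 ≤ Kt i j) :
    List.TFAE [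
      ∀ η : Fin n → ℝ, (∀ i, 0 ≤ η i) → eRad K η = eRad Kt η,
      ∀ η : Fin n → ℝ, (∀ i, η i = 0 ∨ η i = 1) → eRad K η = eRad Kt η,
      ∀ η : Fin n → ℝ, (∀ i, 0 ≤ η i) → espec K η = espec Kt η,
      ∀ η : Fin n → ℝ, (∀ i, η i = 0 ∨ η i = 1) → espec K η = espec Kt η,
      ∀ α : Finset (Fin n), α.Nonempty → pminor K α = pminor Kt α] :=
  effective_spectrum_principal_minors_tfae_general K Kt hK hKt
end

section
/- Let γ > 0, let β = √(1+γ²) − 1, and let K = [[1,β],[β,1]] and K̃ = [[1,−γ],[γ,1]] be 2×2 real matrices. Then: the eigenvalues of K are √(1+γ²) and 2 − √(1+γ²); the eigenvalues of K̃ are 1 + γi and 1 − γi; R_e[K](η) = R_e[K̃](η) for all η ∈ {0,1}²; but there exists η ∈ ℝ₊² with R_e[K](η) ≠ R_e[K̃](η). -/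
open Matrix

/-!
For a 2×2 matrix the spectrum is the root set of `X² - tr X + det`. If `η` has a zero entry,
`K * diagonal η` is singular and its spectral radius is `|tr|`, which sees only the diagonal of `K`;
for `η = 1` both spectral radii equal `√(1 + γ²)`. For `η = (a, 1)` the two products have the same
trace `a + 1` and real eigenvalues, so the spectral radius `(tr + √(tr² - 4 det)) / 2` determines
the determinant, and the determinants `a (1 - β²)` and `a (1 + γ²)` differ.
-/

theorem Matrix.spectrum_fin_two_eq_pair {𝕜 : Type*} [Field 𝕜] (M : Matrix (Fin 2) (Fin 2) 𝕜)
    {r₁ r₂ : 𝕜} (htr : M.trace = r₁ + r₂) (hdet : M.det = r₁ * r₂) :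
    spectrum 𝕜 M = {r₁, r₂} := by
  ext z
  have hfactor : z ^ 2 - (r₁ + r₂) * z + r₁ * r₂ = (z - r₁) * (z - r₂) := by ring
  simp [mem_spectrum_iff_isRoot_charpoly, charpoly_fin_two, htr, hdet, hfactor, sub_eq_zero]

theorem specRad_eq_max_of_spectrum_eq_pair {ι : Type*} [Fintype ι] [DecidableEq ι]
    {M : Matrix ι ι ℝ} {r₁ r₂ : ℂ} (h : spectrum ℂ (M.map Complex.ofReal) = {r₁, r₂}) :
    specRad M = max ‖r₁‖ ‖r₂‖ := by
  rw [specRad, h, Set.image_pair, csSup_pair]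

theorem specRad_fin_two_eq_max (M : Matrix (Fin 2) (Fin 2) ℝ) {r₁ r₂ : ℂ}
    (htr : (M.trace : ℂ) = r₁ + r₂) (hdet : (M.det : ℂ) = r₁ * r₂) :
    specRad M = max ‖r₁‖ ‖r₂‖ := by
  refine specRad_eq_max_of_spectrum_eq_pair (spectrum_fin_two_eq_pair _ ?_ ?_)
  · rw [← htr]; exact (AddMonoidHom.map_trace Complex.ofRealHom M).symm
  · rw [← hdet]; exact (RingHom.map_det Complex.ofRealHom M).symm

theorem specRad_fin_two_eq_of_discrim_nonneg (M : Matrix (Fin 2) (Fin 2) ℝ) (htr : 0 ≤ M.trace)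
    (hD : 0 ≤ M.trace ^ 2 - 4 * M.det) :
    specRad M = (M.trace + √(M.trace ^ 2 - 4 * M.det)) / 2 := by
  set D := M.trace ^ 2 - 4 * M.det with hD_def
  have hsq : ((√D : ℝ) : ℂ) ^ 2 = (M.trace : ℂ) ^ 2 - 4 * M.det := by
    rw [← Complex.ofReal_pow, Real.sq_sqrt hD]; push_cast [hD_def]; ring
  rw [specRad_fin_two_eq_max M (r₁ := ((M.trace + √D) / 2 : ℝ)) (r₂ := ((M.trace - √D) / 2 : ℝ))
    (by push_cast; ring) (by push_cast; linear_combination (1/4 : ℂ) * hsq)]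
  simp only [Complex.norm_real, Real.norm_eq_abs]
  have hsqrt_nonneg := Real.sqrt_nonneg D
  rw [abs_of_nonneg (by positivity), max_eq_left (abs_le.mpr ⟨by linarith, by linarith⟩)]

theorem specRad_fin_two_ne_of_det_ne {M N : Matrix (Fin 2) (Fin 2) ℝ} (htr : M.trace = N.trace)
    (htr_nonneg : 0 ≤ N.trace) (hM : 0 ≤ M.trace ^ 2 - 4 * M.det)
    (hN : 0 ≤ N.trace ^ 2 - 4 * N.det) (hdet : M.det ≠ N.det) : specRad M ≠ specRad N := by
  rw [specRad_fin_two_eq_of_discrim_nonneg M (htr ▸ htr_nonneg) hM,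
    specRad_fin_two_eq_of_discrim_nonneg N htr_nonneg hN]
  rw [htr] at hM ⊢
  intro h
  have hdiscrim := (Real.sqrt_inj hM hN).mp (by linarith)
  exact hdet (by linarith)

theorem trace_mul_diagonal_fin_two (K : Matrix (Fin 2) (Fin 2) ℝ) (η : Fin 2 → ℝ) :
    (K * diagonal η).trace = K 0 0 * η 0 + K 1 1 * η 1 := by
  simp [trace_fin_two]

theorem eRad_fin_two_of_mul_eq_zero (K : Matrix (Fin 2) (Fin 2) ℝ) {η : Fin 2 → ℝ}
    (hη : η 0 * η 1 = 0) : eRad K η = |K 0 0 * η 0 + K 1 1 * η 1| := by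
  rw [eRad, specRad_fin_two_eq_max _ (r₁ := ((K 0 0 * η 0 + K 1 1 * η 1 : ℝ) : ℂ)) (r₂ := 0)]
  · rw [Complex.norm_real, Real.norm_eq_abs, norm_zero, max_eq_left (abs_nonneg _)]
  · rw [trace_mul_diagonal_fin_two]; simp
  · simp [det_mul, Fin.prod_univ_two, hη]

theorem eRad_one {ι : Type*} [Fintype ι] [DecidableEq ι] (K : Matrix ι ι ℝ) :
    eRad K 1 = specRad K := by
  simp [eRad]

theorem eRad_fin_two_eq_of_boolean {K K' : Matrix (Fin 2) (Fin 2) ℝ} (h₀ : K 0 0 = K' 0 0)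
    (h₁ : K 1 1 = K' 1 1) (hK : specRad K = specRad K') (η : Fin 2 → ℝ)
    (hη : ∀ i, η i = 0 ∨ η i = 1) : eRad K η = eRad K' η := by
  by_cases hzero : η 0 * η 1 = 0
  · rw [eRad_fin_two_of_mul_eq_zero K hzero, eRad_fin_two_of_mul_eq_zero K' hzero, h₀, h₁]
  · obtain rfl : η = 1 := by
      funext i
      fin_cases i <;> simp_all
    rw [eRad_one, eRad_one, hK]

theorem exists_eRad_ne (β : ℝ) {γ : ℝ} (hγ : γ ≠ 0) : ∃ η : Fin 2 → ℝ, (∀ i, 0 ≤ η i) ∧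
    eRad !![(1 : ℝ), β; β, 1] η ≠ eRad !![(1 : ℝ), -γ; γ, 1] η := by
  -- with this weight the discriminant of `!![1, -γ; γ, 1] * diagonal η` is exactly `1`
  set a := 4 * γ ^ 2 + 2
  have ha : 0 < a := by positivity
  refine ⟨![a, 1], fun i => by fin_cases i <;> simp [ha.le], ?_⟩
  have htr (K : Matrix (Fin 2) (Fin 2) ℝ) (hK₀ : K 0 0 = 1) (hK₁ : K 1 1 = 1) :
      (K * diagonal ![a, 1]).trace = a + 1 := by
    rw [trace_mul_diagonal_fin_two, hK₀, hK₁]; simp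
  have hK := htr !![(1 : ℝ), β; β, 1] rfl rfl
  have hK' := htr !![(1 : ℝ), -γ; γ, 1] rfl rfl
  refine specRad_fin_two_ne_of_det_ne (hK.trans hK'.symm) (by rw [hK']; positivity) ?_ ?_ ?_ <;>
    simp only [hK, hK', det_mul, det_diagonal, Fin.prod_univ_two, det_fin_two_of,
      cons_val_zero, cons_val_one, mul_one]
  · nlinarith [sq_nonneg (a - 1), mul_nonneg ha.le (sq_nonneg β)]
  · nlinarith
  · intro h
    have hdiag := mul_right_cancel₀ ha.ne' h
    nlinarith [sq_nonneg β, sq_pos_of_ne_zero hγ]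

theorem same_eRad_on_boolean_but_not_everywhere
    (γ : ℝ) (hγ : 0 < γ) (β : ℝ) (hβ : β = Real.sqrt (1 + γ ^ 2) - 1) :
    spectrum ℂ ((!![(1 : ℝ), β; β, 1]).map (Complex.ofReal : ℝ → ℂ)) =
        {(Real.sqrt (1 + γ ^ 2) : ℂ), ((2 - Real.sqrt (1 + γ ^ 2) : ℝ) : ℂ)} ∧
      spectrum ℂ ((!![(1 : ℝ), -γ; γ, 1]).map (Complex.ofReal : ℝ → ℂ)) =
        {1 + γ * Complex.I, 1 - γ * Complex.I} ∧
      (∀ η : Fin 2 → ℝ, (∀ i, η i = 0 ∨ η i = 1) →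
        eRad !![(1 : ℝ), β; β, 1] η = eRad !![(1 : ℝ), -γ; γ, 1] η) ∧
      (∃ η : Fin 2 → ℝ, (∀ i, 0 ≤ η i) ∧
        eRad !![(1 : ℝ), β; β, 1] η ≠ eRad !![(1 : ℝ), -γ; γ, 1] η) := by
  set s := √(1 + γ ^ 2)
  have hs_ge : 1 ≤ s := Real.one_le_sqrt.mpr (by nlinarith)
  have hK : spectrum ℂ ((!![(1 : ℝ), β; β, 1]).map Complex.ofReal) =
      {(s : ℂ), ((2 - s : ℝ) : ℂ)} := by
    apply spectrum_fin_two_eq_pair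
    · simp [trace_fin_two]; ring
    · simp [det_fin_two, hβ]; ring
  have hK' : spectrum ℂ ((!![(1 : ℝ), -γ; γ, 1]).map Complex.ofReal) =
      {1 + γ * Complex.I, 1 - γ * Complex.I} := by
    apply spectrum_fin_two_eq_pair
    · simp [trace_fin_two]
    · simp [det_fin_two]; linear_combination (γ : ℂ) ^ 2 * Complex.I_sq
  refine ⟨hK, hK', eRad_fin_two_eq_of_boolean rfl rfl ?_, exists_eRad_ne β hγ.ne'⟩
  have hnorm_add : ‖1 + γ * Complex.I‖ = s := by simpa using Complex.norm_add_mul_I 1 γ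
  have hnorm_sub : ‖1 - γ * Complex.I‖ = s := by
    simpa [sub_eq_add_neg] using Complex.norm_add_mul_I 1 (-γ)
  rw [specRad_eq_max_of_spectrum_eq_pair hK, specRad_eq_max_of_spectrum_eq_pair hK',
    hnorm_add, hnorm_sub, Complex.norm_real, Complex.norm_real, Real.norm_eq_abs, Real.norm_eq_abs,
    abs_of_nonneg (by linarith), max_self, max_eq_left (abs_le.mpr ⟨by linarith, by linarith⟩)]
end

section
/- Let K be an n×n matrix with nonnegative real entries. Then spec[K](η) = spec[K^𝒜](η) for all η ∈ ℝ₊ⁿ, where K^𝒜 is the matrix with entries K^𝒜_{ij} = K_{ij} if i and j both belong to some common maximal irreducible subset of {1,…,n} for K, and K^𝒜_{ij} = 0 otherwise. -/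
open Matrix

/-- `α` is a (nonempty) irreducible set of indices for `K`: the principal
submatrix `K[α]` is irreducible, i.e. `K[β, α \ β] ≠ 0` for every `β ⊆ α`
with `β` and `α \ β` nonempty. -/
def IsIrredSet {n : ℕ} (K : Matrix (Fin n) (Fin n) ℝ) (α : Finset (Fin n)) : Prop :=
  α.Nonempty ∧
    ∀ β ⊆ α, β.Nonempty → (α \ β).Nonempty → ∃ i ∈ β, ∃ j ∈ α \ β, K i j ≠ 0

/-- `α` is a maximal (for inclusion) irreducible set of indices for `K`. -/
def IsMaxIrredSet {n : ℕ} (K : Matrix (Fin n) (Fin n) ℝ) (α : Finset (Fin n)) : Prop :=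
  IsIrredSet K α ∧ ∀ β : Finset (Fin n), IsIrredSet K β → α ⊆ β → α = β

-- The matrix `K^𝒜`: entries of `K` on the maximal irreducible sets, `0` elsewhere.
open Classical in
noncomputable def matA {n : ℕ} (K : Matrix (Fin n) (Fin n) ℝ) :
    Matrix (Fin n) (Fin n) ℝ := fun i j =>
  if ∃ α : Finset (Fin n), IsMaxIrredSet K α ∧ i ∈ α ∧ j ∈ α then K i j else 0


/-!
Expanding `det (μ - M)` by the Leibniz formula, the term of a permutation `σ` involves, besides
diagonal entries, only the entries `M (σ j) j` at the points `j` moved by `σ`. If `K (σ j) j ≠ 0`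
for all of them, each cycle of `σ` is an irreducible set for `K`, hence lies in a maximal one, so
`K^𝒜` and `K` agree on every entry of the term; otherwise both terms vanish. Thus `K Diag(η)` and
`K^𝒜 Diag(η)` have the same characteristic polynomial.
-/

open Equiv

namespace Matrix

variable {ι R S : Type*}

def AgreesAlongCycles [Zero R] (A B : Matrix ι ι R) : Prop :=
  (∀ σ : Perm ι, (∀ j, σ j ≠ j → A (σ j) j ≠ 0) → ∀ i, B (σ i) i = A (σ i) i) ∧
    ∀ i j, i ≠ j → B i j = A i j ∨ B i j = 0

namespace AgreesAlongCycles

lemma map [Zero R] [Zero S] {A B : Matrix ι ι R} (h : AgreesAlongCycles A B) (f : R → S)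
    (hf : f 0 = 0) : AgreesAlongCycles (A.map f) (B.map f) := by
  refine ⟨fun σ hσ i => ?_, fun i j hij => ?_⟩
  · refine congrArg f (h.1 σ (fun j hj hA => hσ j hj ?_) i)
    simp [hA, hf]
  · rcases h.2 i j hij with hB | hB <;> simp [hB, hf]

variable [Fintype ι] [DecidableEq ι]

lemma mul_diagonal [NonUnitalNonAssocSemiring R] {A B : Matrix ι ι R}
    (h : AgreesAlongCycles A B) (η : ι → R) :
    AgreesAlongCycles (A * diagonal η) (B * diagonal η) := by
  refine ⟨fun σ hσ i => ?_, fun i j hij => ?_⟩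
  · rw [Matrix.mul_diagonal, Matrix.mul_diagonal]
    refine congrArg (· * η i) (h.1 σ (fun j hj hA => hσ j hj ?_) i)
    simp [hA]
  · rcases h.2 i j hij with hB | hB <;> simp [hB]

variable [CommRing R] {A B : Matrix ι ι R}

lemma algebraMap_sub (h : AgreesAlongCycles A B) (μ : R) :
    AgreesAlongCycles (algebraMap R (Matrix ι ι R) μ - A) (algebraMap R (Matrix ι ι R) μ - B) := by
  refine ⟨fun σ hσ i => ?_, fun i j hij => ?_⟩
  · refine congrArg (_ - ·) (h.1 σ (fun j hj hA => hσ j hj ?_) i)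
    simp [algebraMap_matrix_apply, hj, hA]
  · rcases h.2 i j hij with hB | hB <;> simp [algebraMap_matrix_apply, hij, hB]

lemma det_eq (h : AgreesAlongCycles A B) : A.det = B.det := by
  rw [det_apply, det_apply]
  refine Finset.sum_congr rfl fun σ _ => congrArg _ ?_
  by_cases hσ : ∀ j, σ j ≠ j → A (σ j) j ≠ 0
  · exact Finset.prod_congr rfl fun i _ => (h.1 σ hσ i).symm
  · push Not at hσ
    obtain ⟨j, hj, hA⟩ := hσ
    have hB : B (σ j) j = 0 := by rcases h.2 _ _ hj with hB | hB <;> simp [hB, hA]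
    rw [Finset.prod_eq_zero (f := fun i => A (σ i) i) (Finset.mem_univ j) hA,
      Finset.prod_eq_zero (f := fun i => B (σ i) i) (Finset.mem_univ j) hB]

lemma spectrum_eq (h : AgreesAlongCycles A B) : spectrum R A = spectrum R B := by
  ext μ
  rw [spectrum.mem_iff, spectrum.mem_iff, isUnit_iff_isUnit_det, isUnit_iff_isUnit_det,
    (h.algebraMap_sub μ).det_eq]

end AgreesAlongCycles

end Matrix

variable {n : ℕ} (K : Matrix (Fin n) (Fin n) ℝ)

lemma IsIrredSet.exists_isMaxIrredSet_superset {α : Finset (Fin n)} (h : IsIrredSet K α) :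
    ∃ β, IsMaxIrredSet K β ∧ α ⊆ β := by
  obtain ⟨β, hαβ, hβ, hmax⟩ := Finite.exists_le_maximal (p := IsIrredSet K) h
  exact ⟨β, ⟨hβ, fun γ hγ hβγ => le_antisymm hβγ (hmax hγ hβγ)⟩, hαβ⟩

lemma isIrredSet_singleton (i : Fin n) : IsIrredSet K {i} := by
  refine ⟨Finset.singleton_nonempty i, fun β hβ hne hne' => absurd hne' ?_⟩
  rcases Finset.subset_singleton_iff.1 hβ with rfl | rfl
  · simp at hne
  · simp

/-- If no entry of `K` leads from the rest of the cycle into a part `β` of it, then `σ` maps the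
rest into itself, so it never reaches `β`. -/
lemma isIrredSet_sameCycle (σ : Perm (Fin n)) (hσ : ∀ j, σ j ≠ j → K (σ j) j ≠ 0) {i : Fin n}
    (hi : σ i ≠ i) : IsIrredSet K (Finset.univ.filter (σ.SameCycle i)) := by
  set α := Finset.univ.filter (σ.SameCycle i)
  have hmem : ∀ {j}, j ∈ α ↔ σ.SameCycle i j := by simp [α]
  refine ⟨⟨i, hmem.2 (Perm.SameCycle.refl σ i)⟩, fun β hβα ⟨b, hb⟩ ⟨c, hc⟩ => ?_⟩
  by_contra hnone
  push Not at hnone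
  have hmaps : Set.MapsTo σ ↑(α \ β) ↑(α \ β) := by
    intro j hj
    obtain ⟨hjα, -⟩ := Finset.mem_sdiff.1 hj
    have hσjα : σ j ∈ α := hmem.2 (Perm.sameCycle_apply_right.2 (hmem.1 hjα))
    refine Finset.mem_sdiff.2 ⟨hσjα, fun hσjβ => ?_⟩
    exact hσ j ((hmem.1 hjα).apply_eq_self_iff.not.1 hi) (hnone (σ j) hσjβ j hj)
  have hcb : σ.SameCycle c b := (hmem.1 (Finset.mem_sdiff.1 hc).1).symm.trans (hmem.1 (hβα hb))
  obtain ⟨m, -, hm⟩ := hcb.exists_pow_eq'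
  have hbc : b ∈ α \ β := by
    rw [← hm, Perm.coe_pow]
    exact hmaps.iterate m hc
  exact (Finset.mem_sdiff.1 hbc).2 hb

lemma matA_apply_of_isIrredSet {α : Finset (Fin n)} (hα : IsIrredSet K α) {i j : Fin n}
    (hi : i ∈ α) (hj : j ∈ α) : matA K i j = K i j := by
  obtain ⟨β, hβ, hαβ⟩ := hα.exists_isMaxIrredSet_superset
  exact if_pos ⟨β, hβ, hαβ hi, hαβ hj⟩

lemma matA_apply_eq_or_eq_zero (i j : Fin n) : matA K i j = K i j ∨ matA K i j = 0 := by
  unfold matA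
  split_ifs <;> simp

lemma agreesAlongCycles_matA : Matrix.AgreesAlongCycles K (matA K) := by
  refine ⟨fun σ hσ i => ?_, fun i j _ => matA_apply_eq_or_eq_zero K i j⟩
  by_cases hi : σ i = i
  · rw [hi]
    exact matA_apply_of_isIrredSet K (isIrredSet_singleton K i)
      (Finset.mem_singleton_self i) (Finset.mem_singleton_self i)
  · refine matA_apply_of_isIrredSet K (isIrredSet_sameCycle K σ hσ hi) ?_ ?_ <;>
      simpa [Perm.sameCycle_apply_right] using Perm.SameCycle.refl σ i

theorem espec_matA_general {n : ℕ} (K : Matrix (Fin n) (Fin n) ℝ) :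
    ∀ η : Fin n → ℝ, (∀ i, 0 ≤ η i) → espec K η = espec (matA K) η := fun η _ =>
  (((agreesAlongCycles_matA K).mul_diagonal η).map _ Complex.ofReal_zero).spectrum_eq

theorem espec_matA {n : ℕ} (K : Matrix (Fin n) (Fin n) ℝ)
    (hK : ∀ i j, 0 ≤ K i j) :
    ∀ η : Fin n → ℝ, (∀ i, 0 ≤ η i) → espec K η = espec (matA K) η :=
  espec_matA_general K
end

section
/- Let K and K̃ be symmetric n×n matrices with nonnegative real entries such that R_e[K](η) = R_e[K̃](η) for all η ∈ ℝ₊ⁿ. Then K̃ = K. -/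
open Matrix

/-!
At an indicator weight `η = 1_S`, the matrix `K * Diag η` factors as `U * V` with `U` the columns
of `K` in `S` and `V` the rows of the identity in `S`, while `V * U` is the principal submatrix
`K_SS`. Since `U * V` and `V * U` have the same nonzero eigenvalues, `R_e[K](1_S) = ρ(K_SS)`.
Singletons recover the diagonal of `K`, and for `S = {i, j}` the spectral radius
`(|a + b| + √((a - b)² + 4c²)) / 2` of the symmetric block `!![a, c; c, b]` then determines
`K i j ^ 2`, hence the nonnegative entry `K i j`.
-/

lemma Real.sSup_insert_zero {X : Set ℝ} (hX : BddAbove X) (h0 : ∀ x ∈ X, 0 ≤ x) :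
    sSup (insert 0 X) = sSup X := by
  rcases X.eq_empty_or_nonempty with rfl | hne
  · simp
  · rw [csSup_insert hX hne, sup_eq_right.2 (Real.sSup_nonneg h0)]

lemma sSup_norm_image_eq_of_sdiff_zero_eq {S T : Set ℂ} (hS : S.Finite) (hT : T.Finite)
    (h : S \ {0} = T \ {0}) : sSup (norm '' S) = sSup (norm '' T) := by
  have hsSup (S : Set ℂ) (hS : S.Finite) :
      sSup (norm '' S) = sSup (insert 0 (norm '' (S \ {0}))) := by
    have hinsert : insert 0 (norm '' (S \ {0})) = insert 0 (norm '' S) := by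
      ext x
      simp only [Set.mem_insert_iff, Set.mem_image, Set.mem_sdiff, Set.mem_singleton_iff]
      grind [norm_zero]
    rw [hinsert, Real.sSup_insert_zero (hS.image _).bddAbove (by simp)]
  rw [hsSup S hS, hsSup T hT, h]

lemma Matrix.spectrum_mul_comm_sdiff_zero {m k K : Type*} [Fintype m] [Fintype k]
    [DecidableEq m] [DecidableEq k] [Field K] (A : Matrix m k K) (B : Matrix k m K) :
    spectrum K (A * B) \ {0} = spectrum K (B * A) \ {0} := by
  ext μ
  simp only [Set.mem_sdiff, Set.mem_singleton_iff, mem_spectrum_iff_isRoot_charpoly,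
    Polynomial.IsRoot.def, and_congr_left_iff]
  intro hμ
  have hchar := congrArg (Polynomial.eval μ) (charpoly_mul_comm' A B)
  simp only [Polynomial.eval_mul, Polynomial.eval_pow, Polynomial.eval_X] at hchar
  constructor <;> intro h0 <;> simp_all

lemma specRad_mul_comm {m k : Type*} [Fintype m] [Fintype k] [DecidableEq m] [DecidableEq k]
    (A : Matrix m k ℝ) (B : Matrix k m ℝ) : specRad (A * B) = specRad (B * A) := by
  unfold specRad
  have hspec := spectrum_mul_comm_sdiff_zero (A.map Complex.ofRealHom) (B.map Complex.ofRealHom)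
  rw [← Matrix.map_mul, ← Matrix.map_mul] at hspec
  exact sSup_norm_image_eq_of_sdiff_zero_eq (finite_spectrum _) (finite_spectrum _) hspec

lemma mul_diagonal_indicator_range {ι κ α : Type*} [Fintype ι] [Fintype κ] [DecidableEq ι]
    [Semiring α] (K : Matrix ι ι α) {e : κ → ι} (he : e.Injective) :
    K * diagonal ((Set.range e).indicator 1) =
      K.submatrix id e * (1 : Matrix ι ι α).submatrix e id := by
  classical
  ext a b
  rw [mul_diagonal, mul_apply]
  by_cases hb : b ∈ Set.range e
  · obtain ⟨t, rfl⟩ := hb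
    simp [one_apply, he.eq_iff]
  · simp_all [one_apply]

lemma eRad_indicator_range {ι κ : Type*} [Fintype ι] [Fintype κ] [DecidableEq ι]
    [DecidableEq κ] (K : Matrix ι ι ℝ) {e : κ → ι} (he : e.Injective) :
    eRad K ((Set.range e).indicator 1) = specRad (K.submatrix e e) := by
  rw [eRad, mul_diagonal_indicator_range K he, specRad_mul_comm]
  congr 1
  ext s t
  simp [mul_apply, one_apply]

lemma specRad_fin_one (M : Matrix (Fin 1) (Fin 1) ℝ) : specRad M = |M 0 0| := by
  have hM : M.map Complex.ofReal = algebraMap ℂ (Matrix (Fin 1) (Fin 1) ℂ) (M 0 0) := by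
    ext i j
    fin_cases i; fin_cases j
    simp [algebraMap_matrix_apply]
  rw [specRad, hM, spectrum.scalar_eq, Set.image_singleton, csSup_singleton,
    Complex.norm_real, Real.norm_eq_abs]

lemma max_abs_sub_abs_add_of_nonneg {p s : ℝ} (hs : 0 ≤ s) : max |p - s| |p + s| = |p| + s := by
  rcases abs_cases p with ⟨hp, _⟩ | ⟨hp, _⟩ <;>
    [rw [max_eq_right]; rw [max_eq_left]] <;>
    cases abs_cases (p - s) <;> cases abs_cases (p + s) <;> linarith

lemma specRad_symm_fin_two (a b c : ℝ) :
    specRad !![a, c; c, b] = (|a + b| + √((a - b) ^ 2 + 4 * c ^ 2)) / 2 := by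
  set s := √((a - b) ^ 2 + 4 * c ^ 2) with hs
  have hs2 : (s : ℂ) ^ 2 = (a - b) ^ 2 + 4 * c ^ 2 := by
    exact_mod_cast Real.sq_sqrt (by positivity)
  have hspec : spectrum ℂ (!![a, c; c, b].map Complex.ofReal) =
      {(((a + b - s) / 2 : ℝ) : ℂ), (((a + b + s) / 2 : ℝ) : ℂ)} := by
    ext μ
    have hcharpoly : (!![a, c; c, b].map Complex.ofReal).charpoly.eval μ =
        (μ - ((a + b - s) / 2 : ℝ)) * (μ - ((a + b + s) / 2 : ℝ)) := by
      rw [charpoly_fin_two, trace_fin_two, det_fin_two]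
      simp only [map_apply, of_apply, cons_val', cons_val_zero, cons_val_fin_one, cons_val_one,
        map_add, map_sub, map_mul, Polynomial.eval_add, Polynomial.eval_sub, Polynomial.eval_pow,
        Polynomial.eval_X, Polynomial.eval_mul, Polynomial.eval_C, Complex.ofReal_div,
        Complex.ofReal_sub, Complex.ofReal_add, Complex.ofReal_ofNat]
      linear_combination (1 / 4 : ℂ) * hs2
    rw [mem_spectrum_iff_isRoot_charpoly, Polynomial.IsRoot.def, hcharpoly, mul_eq_zero,
      sub_eq_zero, sub_eq_zero]
    rfl
  rw [specRad, hspec, Set.image_pair, Complex.norm_real, Complex.norm_real, csSup_pair]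
  simp only [Real.norm_eq_abs, abs_div, abs_two]
  rw [max_div_div_right zero_le_two, max_abs_sub_abs_add_of_nonneg (Real.sqrt_nonneg _)]

lemma Matrix.IsSymm.submatrix_pair {ι α : Type*} {K : Matrix ι ι α} (hK : K.IsSymm)
    (i j : ι) :
    K.submatrix ![i, j] ![i, j] = !![K i i, K i j; K i j, K j j] := by
  ext a b
  fin_cases a <;> fin_cases b <;> simp [hK.apply]

section

variable {ι : Type*} [Fintype ι] [DecidableEq ι]

lemma eRad_indicator_singleton (K : Matrix ι ι ℝ) (i : ι) :
    eRad K (({i} : Set ι).indicator 1) = |K i i| := by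
  rw [← Set.range_const (ι := Fin 1),
    eRad_indicator_range K (Function.injective_of_subsingleton _), specRad_fin_one]
  rfl

lemma eRad_indicator_pair {K : Matrix ι ι ℝ} (hK : K.IsSymm) {i j : ι} (hij : i ≠ j) :
    eRad K (({i, j} : Set ι).indicator 1) =
      (|K i i + K j j| + √((K i i - K j j) ^ 2 + 4 * K i j ^ 2)) / 2 := by
  rw [← range_cons_cons_empty i j ![], eRad_indicator_range K (injective_pair_iff_ne.2 hij),
    hK.submatrix_pair, specRad_symm_fin_two]

end

theorem same_eRad_symm_implies_eq {n : ℕ} (K Kt : Matrix (Fin n) (Fin n) ℝ)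
    (hK : ∀ i j, 0 ≤ K i j) (hKt : ∀ i j, 0 ≤ Kt i j)
    (hKs : K.IsSymm) (hKts : Kt.IsSymm)
    (h : ∀ η : Fin n → ℝ, (∀ i, 0 ≤ η i) → eRad K η = eRad Kt η) :
    Kt = K := by
  have h_indicator (S : Set (Fin n)) :=
    h (S.indicator 1) (S.indicator_nonneg fun _ _ => zero_le_one)
  have hdiag (i : Fin n) : Kt i i = K i i := by
    have hsingle := h_indicator {i}
    rwa [eRad_indicator_singleton, eRad_indicator_singleton, abs_of_nonneg (hK i i),
      abs_of_nonneg (hKt i i), eq_comm] at hsingle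
  ext i j
  obtain rfl | hij := eq_or_ne i j
  · exact hdiag i
  have hpair := h_indicator {i, j}
  rw [eRad_indicator_pair hKs hij, eRad_indicator_pair hKts hij, hdiag i, hdiag j,
    div_left_inj' two_ne_zero, add_right_inj, Real.sqrt_inj (by positivity) (by positivity),
    add_right_inj, mul_right_inj' four_ne_zero] at hpair
  exact ((sq_eq_sq₀ (hK i j) (hKt i j)).1 hpair).symm
end

section
/- Let n = m + p with m, p ≥ 1, let A be an m×m real matrix, B a p×p real matrix, v, w ∈ ℝᵐ, and b, c ∈ ℝᵖ. Let K be the n×n block matrix [[A, v·bᵀ],[c·wᵀ, B]] and let K̃ be the n×n block matrix [[Aᵀ, w·bᵀ],[c·vᵀ, B]] (a partial transpose of K). Then R_e[K](η) = R_e[K̃](η) for all η ∈ ℝ₊ⁿ. -/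
open Matrix

/-!
Since the off-diagonal blocks have rank one, the Schur complement of `μ - A` in `μ - K` gives
`det (μ - K) = det (μ - A) * det ((μ - B) - (wᵀ (μ - A)⁻¹ v) • c bᵀ)`.
Replacing `A` by `Aᵀ` and swapping `v` and `w` changes neither `det (μ - A)` nor the scalar
`wᵀ (μ - A)⁻¹ v`, so the two characteristic polynomials agree at all but finitely many `μ`.
The weight is absorbed by writing `K̃ Diag η = Y Diag (η₁, 1)`, where `Diag (η₁, 1) Y` is the
partial transpose of `K Diag η`, and using `charpoly (X Y) = charpoly (Y X)`.
-/

open Polynomial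

section

variable {R F ι κ : Type*} [Fintype ι] [DecidableEq ι] [Fintype κ] [DecidableEq κ]

theorem det_fromBlocks_vecMulVec [CommRing R] (X : Matrix ι ι R) (hX : IsUnit X.det)
    (Y : Matrix κ κ R) (v w : ι → R) (b c : κ → R) :
    (fromBlocks X (vecMulVec v b) (vecMulVec c w) Y).det =
      X.det * (Y - (w ⬝ᵥ X⁻¹ *ᵥ v) • vecMulVec c b).det := by
  have := X.invertibleOfIsUnitDet hX
  rw [det_fromBlocks₁₁, invOf_eq_nonsing_inv, vecMulVec_mul, vecMulVec_mul_vecMulVec,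
    ← dotProduct_mulVec, vecMulVec_smul]

theorem det_fromBlocks_transpose_vecMulVec [CommRing R] (X : Matrix ι ι R) (hX : IsUnit X.det)
    (Y : Matrix κ κ R) (v w : ι → R) (b c : κ → R) :
    (fromBlocks Xᵀ (vecMulVec w b) (vecMulVec c v) Y).det =
      (fromBlocks X (vecMulVec v b) (vecMulVec c w) Y).det := by
  rw [det_fromBlocks_vecMulVec Xᵀ (by rwa [det_transpose]), det_fromBlocks_vecMulVec X hX,
    det_transpose, ← transpose_nonsing_inv, mulVec_transpose, dotProduct_comm,
    dotProduct_mulVec]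

theorem scalar_sub_fromBlocks_vecMulVec [CommRing R] (μ : R) (P : Matrix ι ι R)
    (Q : Matrix κ κ R) (x t : ι → R) (y z : κ → R) :
    scalar (ι ⊕ κ) μ - fromBlocks P (vecMulVec x y) (vecMulVec z t) Q =
      fromBlocks (scalar ι μ - P) (vecMulVec x (-y)) (vecMulVec (-z) t) (scalar κ μ - Q) := by
  ext (i | i) (j | j) <;> simp [vecMulVec_apply, sub_eq_add_neg, diagonal_apply]

theorem charpoly_fromBlocks_transpose_vecMulVec [Field F] [Infinite F] (A : Matrix ι ι F)
    (B : Matrix κ κ F) (v w : ι → F) (b c : κ → F) :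
    (fromBlocks Aᵀ (vecMulVec w b) (vecMulVec c v) B).charpoly =
      (fromBlocks A (vecMulVec v b) (vecMulVec c w) B).charpoly := by
  refine eq_of_infinite_eval_eq _ _
    ((finite_setOfPred_isRoot A.charpoly_monic.ne_zero).infinite_compl.mono fun μ hμ => ?_)
  have hA : IsUnit (scalar ι μ - A).det := by
    rw [← eval_charpoly]; exact isUnit_iff_ne_zero.2 hμ
  have hAt : scalar ι μ - Aᵀ = (scalar ι μ - A)ᵀ := by
    rw [transpose_sub, scalar_apply, diagonal_transpose]
  change eval μ _ = eval μ _
  rw [eval_charpoly, eval_charpoly, scalar_sub_fromBlocks_vecMulVec,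
    scalar_sub_fromBlocks_vecMulVec, hAt, det_fromBlocks_transpose_vecMulVec _ hA]

theorem fromBlocks_vecMulVec_mul_diagonal [CommRing R] (A : Matrix ι ι R) (B : Matrix κ κ R)
    (v w : ι → R) (b c : κ → R) (d₁ : ι → R) (d₂ : κ → R) :
    fromBlocks A (vecMulVec v b) (vecMulVec c w) B * diagonal (Sum.elim d₁ d₂) =
      fromBlocks (A * diagonal d₁) (vecMulVec v (b * d₂)) (vecMulVec c (w * d₁))
        (B * diagonal d₂) := by
  ext (i | i) (j | j) <;> simp [vecMulVec_apply, mul_assoc]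

theorem diagonal_mul_fromBlocks_vecMulVec [CommRing R] (A : Matrix ι ι R) (B : Matrix κ κ R)
    (v w : ι → R) (b c : κ → R) (d₁ : ι → R) (d₂ : κ → R) :
    diagonal (Sum.elim d₁ d₂) * fromBlocks A (vecMulVec v b) (vecMulVec c w) B =
      fromBlocks (diagonal d₁ * A) (vecMulVec (d₁ * v) b) (vecMulVec (d₂ * c) w)
        (diagonal d₂ * B) := by
  ext (i | i) (j | j) <;> simp [vecMulVec_apply, mul_assoc]

theorem charpoly_fromBlocks_transpose_vecMulVec_mul_diagonal [Field F] [Infinite F]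
    (A : Matrix ι ι F) (B : Matrix κ κ F) (v w : ι → F) (b c : κ → F) (η : ι ⊕ κ → F) :
    (fromBlocks Aᵀ (vecMulVec w b) (vecMulVec c v) B * diagonal η).charpoly =
      (fromBlocks A (vecMulVec v b) (vecMulVec c w) B * diagonal η).charpoly := by
  obtain ⟨d₁, d₂, rfl⟩ : ∃ d₁ d₂, η = Sum.elim d₁ d₂ :=
    ⟨η ∘ Sum.inl, η ∘ Sum.inr, (Sum.elim_comp_inl_inr η).symm⟩
  set Y := fromBlocks Aᵀ (vecMulVec w (b * d₂)) (vecMulVec c v) (B * diagonal d₂)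
  have hYE : fromBlocks Aᵀ (vecMulVec w b) (vecMulVec c v) B * diagonal (Sum.elim d₁ d₂) =
      Y * diagonal (Sum.elim d₁ 1) := by
    rw [fromBlocks_vecMulVec_mul_diagonal, fromBlocks_vecMulVec_mul_diagonal,
      mul_one, Pi.one_def, diagonal_one, Matrix.mul_one]
  have hEY : diagonal (Sum.elim d₁ 1) * Y =
      fromBlocks (A * diagonal d₁)ᵀ (vecMulVec (w * d₁) (b * d₂)) (vecMulVec c v)
        (B * diagonal d₂) := by
    rw [diagonal_mul_fromBlocks_vecMulVec, transpose_mul, diagonal_transpose, mul_comm d₁,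
      one_mul, Pi.one_def, diagonal_one, Matrix.one_mul]
  rw [hYE, charpoly_mul_comm, hEY, charpoly_fromBlocks_transpose_vecMulVec,
    fromBlocks_vecMulVec_mul_diagonal]

theorem specRad_eq_of_charpoly_eq {M N : Matrix ι ι ℝ} (h : M.charpoly = N.charpoly) :
    specRad M = specRad N := by
  have hmap (X : Matrix ι ι ℝ) :
      (X.map Complex.ofReal).charpoly = X.charpoly.map Complex.ofRealHom :=
    X.charpoly_map Complex.ofRealHom
  have hspec : spectrum ℂ (M.map Complex.ofReal) = spectrum ℂ (N.map Complex.ofReal) := by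
    ext μ
    rw [mem_spectrum_iff_isRoot_charpoly, mem_spectrum_iff_isRoot_charpoly, hmap, hmap, h]
  rw [specRad, specRad, hspec]

end

theorem eRad_partial_transpose_general {m p : ℕ}
    (A : Matrix (Fin m) (Fin m) ℝ) (B : Matrix (Fin p) (Fin p) ℝ)
    (v w : Fin m → ℝ) (b c : Fin p → ℝ) :
    ∀ η : Fin m ⊕ Fin p → ℝ, (∀ i, 0 ≤ η i) →
      eRad (Matrix.fromBlocks A (Matrix.vecMulVec v b) (Matrix.vecMulVec c w) B) η =
        eRad (Matrix.fromBlocks Aᵀ (Matrix.vecMulVec w b) (Matrix.vecMulVec c v) B) η :=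
  fun η _ => (specRad_eq_of_charpoly_eq
    (charpoly_fromBlocks_transpose_vecMulVec_mul_diagonal A B v w b c η)).symm

theorem eRad_partial_transpose {m p : ℕ} (hm : 1 ≤ m) (hp : 1 ≤ p)
    (A : Matrix (Fin m) (Fin m) ℝ) (B : Matrix (Fin p) (Fin p) ℝ)
    (v w : Fin m → ℝ) (b c : Fin p → ℝ) :
    ∀ η : Fin m ⊕ Fin p → ℝ, (∀ i, 0 ≤ η i) →
      eRad (Matrix.fromBlocks A (Matrix.vecMulVec v b) (Matrix.vecMulVec c w) B) η =
        eRad (Matrix.fromBlocks Aᵀ (Matrix.vecMulVec w b) (Matrix.vecMulVec c v) B) η :=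
  eRad_partial_transpose_general A B v w b c
end

section
/- Let n = m + p with m, p ≥ 1, let A be an m×m real matrix, B a p×p real matrix, v, w ∈ ℝᵐ, and b, c ∈ ℝᵖ. Let K be the n×n block matrix [[A, v·bᵀ],[c·wᵀ, B]] and let K̃ be the n×n block matrix [[Aᵀ, w·bᵀ],[c·vᵀ, B]]. Then det(K − λI) = det(K̃ − λI) for every λ ∈ ℂ; in particular K and K̃ have the same characteristic polynomial and the same spectrum. -/
open Matrix

open Polynomial

namespace Matrix

variable {R : Type*} [CommRing R] {l n : Type*}

theorem vecMulVec_mul_mul_vecMulVec [Fintype l] (c : n → R) (w : l → R) (M : Matrix l l R)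
    (v : l → R) (b : n → R) :
    vecMulVec c w * M * vecMulVec v b = (w ⬝ᵥ M *ᵥ v) • vecMulVec c b := by
  rw [vecMulVec_mul, vecMulVec_mul_vecMulVec, vecMulVec_smul, dotProduct_mulVec]

variable [DecidableEq l] [DecidableEq n]

theorem fromBlocks_sub_smul_one (A : Matrix l l R) (B : Matrix l n R) (C : Matrix n l R)
    (D : Matrix n n R) (t : R) :
    fromBlocks A B C D - t • 1 = fromBlocks (A - t • 1) B C (D - t • 1) := by
  rw [← fromBlocks_one, fromBlocks_smul, sub_eq_add_neg, fromBlocks_neg, fromBlocks_add]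
  simp [sub_eq_add_neg]

variable [Fintype l] [Fintype n]

theorem det_sub_smul_one (M : Matrix n n R) (t : R) :
    (M - t • 1).det = (-1) ^ Fintype.card n * M.charpoly.eval t := by
  rw [eval_charpoly, ← det_neg, neg_sub, scalar_apply, smul_one_eq_diagonal]

theorem det_fromBlocks_vecMulVec {A : Matrix l l R} (hA : IsUnit A.det) (D : Matrix n n R)
    (v w : l → R) (b c : n → R) :
    (fromBlocks A (vecMulVec v b) (vecMulVec c w) D).det =
      A.det * (D - (w ⬝ᵥ A⁻¹ *ᵥ v) • vecMulVec c b).det := by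
  let := A.invertibleOfIsUnitDet hA
  rw [det_fromBlocks₁₁, invOf_eq_nonsing_inv, vecMulVec_mul_mul_vecMulVec]

/-- The Schur complement of `A` sees `A`, `v`, `w` only through the scalar `w ⬝ᵥ A⁻¹ *ᵥ v`,
which is unchanged when `A` is transposed and `v`, `w` are swapped. -/
theorem det_fromBlocks_vecMulVec_transpose {A : Matrix l l R} (hA : IsUnit A.det)
    (D : Matrix n n R) (v w : l → R) (b c : n → R) :
    (fromBlocks A (vecMulVec v b) (vecMulVec c w) D).det =
      (fromBlocks Aᵀ (vecMulVec w b) (vecMulVec c v) D).det := by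
  have hAT : IsUnit Aᵀ.det := by rwa [det_transpose]
  have hdot : v ⬝ᵥ Aᵀ⁻¹ *ᵥ w = w ⬝ᵥ A⁻¹ *ᵥ v := by
    rw [← transpose_nonsing_inv, dotProduct_mulVec, vecMul_transpose, dotProduct_comm]
  rw [det_fromBlocks_vecMulVec hA, det_fromBlocks_vecMulVec hAT, hdot, det_transpose]

/-- Both characteristic polynomials agree off the finitely many eigenvalues of `A`, where the
Schur complement argument applies. -/
theorem charpoly_fromBlocks_vecMulVec_transpose {K : Type*} [Field K] [Infinite K]
    (A : Matrix l l K) (D : Matrix n n K) (v w : l → K) (b c : n → K) :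
    (fromBlocks A (vecMulVec v b) (vecMulVec c w) D).charpoly =
      (fromBlocks Aᵀ (vecMulVec w b) (vecMulVec c v) D).charpoly := by
  refine eq_of_infinite_eval_eq _ _
    ((finite_setOfPred_isRoot A.charpoly_monic.ne_zero).infinite_compl.mono fun t ht => ?_)
  have hA : IsUnit (A - t • 1).det := by
    rwa [isUnit_iff_ne_zero, det_sub_smul_one, Ne, neg_one_pow_mul_eq_zero_iff]
  have hAT : Aᵀ - t • 1 = (A - t • 1)ᵀ := by
    rw [transpose_sub, transpose_smul, transpose_one]
  refine mul_left_cancel₀ (neg_one_pow_ne_zero (Fintype.card (l ⊕ n))) ?_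
  rw [← det_sub_smul_one, ← det_sub_smul_one, fromBlocks_sub_smul_one, fromBlocks_sub_smul_one,
    hAT, det_fromBlocks_vecMulVec_transpose hA]

end Matrix

theorem charpoly_partial_transpose_general {m p : ℕ}
    (A : Matrix (Fin m) (Fin m) ℝ) (B : Matrix (Fin p) (Fin p) ℝ)
    (v w : Fin m → ℝ) (b c : Fin p → ℝ) :
    (∀ lam : ℂ,
      ((Matrix.fromBlocks A (Matrix.vecMulVec v b) (Matrix.vecMulVec c w) B).map
          (Complex.ofReal : ℝ → ℂ) - lam • 1).det =
        ((Matrix.fromBlocks Aᵀ (Matrix.vecMulVec w b) (Matrix.vecMulVec c v) B).map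
          (Complex.ofReal : ℝ → ℂ) - lam • 1).det) ∧
    ((Matrix.fromBlocks A (Matrix.vecMulVec v b) (Matrix.vecMulVec c w) B).map
        (Complex.ofReal : ℝ → ℂ)).charpoly =
      ((Matrix.fromBlocks Aᵀ (Matrix.vecMulVec w b) (Matrix.vecMulVec c v) B).map
        (Complex.ofReal : ℝ → ℂ)).charpoly ∧
    spectrum ℂ ((Matrix.fromBlocks A (Matrix.vecMulVec v b) (Matrix.vecMulVec c w) B).map
        (Complex.ofReal : ℝ → ℂ)) =
      spectrum ℂ ((Matrix.fromBlocks Aᵀ (Matrix.vecMulVec w b) (Matrix.vecMulVec c v) B).map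
        (Complex.ofReal : ℝ → ℂ)) := by
  have hcp := charpoly_fromBlocks_vecMulVec_transpose A B v w b c
  have hcpℂ : ((fromBlocks A (vecMulVec v b) (vecMulVec c w) B).map Complex.ofReal).charpoly =
      ((fromBlocks Aᵀ (vecMulVec w b) (vecMulVec c v) B).map Complex.ofReal).charpoly := by
    rw [show (Complex.ofReal : ℝ → ℂ) = Complex.ofRealHom from rfl, charpoly_map, charpoly_map,
      hcp]
  refine ⟨fun lam => ?_, hcpℂ, Set.ext fun lam => ?_⟩
  · rw [det_sub_smul_one, det_sub_smul_one, hcpℂ]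
  · rw [mem_spectrum_iff_isRoot_charpoly, mem_spectrum_iff_isRoot_charpoly, hcpℂ]

theorem charpoly_partial_transpose {m p : ℕ} (hm : 1 ≤ m) (hp : 1 ≤ p)
    (A : Matrix (Fin m) (Fin m) ℝ) (B : Matrix (Fin p) (Fin p) ℝ)
    (v w : Fin m → ℝ) (b c : Fin p → ℝ) :
    (∀ lam : ℂ,
      ((Matrix.fromBlocks A (Matrix.vecMulVec v b) (Matrix.vecMulVec c w) B).map
          (Complex.ofReal : ℝ → ℂ) - lam • 1).det =
        ((Matrix.fromBlocks Aᵀ (Matrix.vecMulVec w b) (Matrix.vecMulVec c v) B).map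
          (Complex.ofReal : ℝ → ℂ) - lam • 1).det) ∧
    ((Matrix.fromBlocks A (Matrix.vecMulVec v b) (Matrix.vecMulVec c w) B).map
        (Complex.ofReal : ℝ → ℂ)).charpoly =
      ((Matrix.fromBlocks Aᵀ (Matrix.vecMulVec w b) (Matrix.vecMulVec c v) B).map
        (Complex.ofReal : ℝ → ℂ)).charpoly ∧
    spectrum ℂ ((Matrix.fromBlocks A (Matrix.vecMulVec v b) (Matrix.vecMulVec c w) B).map
        (Complex.ofReal : ℝ → ℂ)) =
      spectrum ℂ ((Matrix.fromBlocks Aᵀ (Matrix.vecMulVec w b) (Matrix.vecMulVec c v) B).map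
        (Complex.ofReal : ℝ → ℂ)) :=
  charpoly_partial_transpose_general A B v w b c
end
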